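/- Let N = 1 and m > 1, and assume (H1). If u is a radial solution on [0,R), then the set of critical points of u in [0,R) has a greatest element: there exists r* ∈ [0,R) with u'(r*) = 0 and u'(r) ≠ 0 for every r ∈ (r*, R). -/

import Mathlib

/-!
Where `f(u) ≤ 0`, the flux `r^{N-1} |u'|^{m-2} u'` is nondecreasing, so past a critical point
it stays nonnegative, hence `u' ≥ 0` and `u` is nondecreasing. As `u > 0` and `u → 0` at `R`,
this cannot happen near `R`, where `u < b` and hence `f(u) ≤ 0` by (H1). So all critical points
lie in some `[0, r₁]`, and the closed set they form there, which contains `0`, has a maximum.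
-/

open Filter Set MeasureTheory intervalIntegral

noncomputable section

/-- The half-open interval `[0, R)` inside `ℝ`, where `R : EReal` may be `∞`. -/
def domR (R : EReal) : Set ℝ := {r : ℝ | 0 ≤ r ∧ (r : EReal) < R}

/-- The filter describing `r → R⁻` inside `ℝ` (it equals `atTop` when `R = ∞`). -/
def limR (R : EReal) : Filter ℝ := Filter.comap Real.toEReal (nhdsWithin R (Set.Iio R))

/-- Assumption (H1): `f` is continuous on `(0,∞)`, nonpositive on `(0,b]` and
positive on `(b,∞)`, with `b > 0`. -/
def H1cond (b : ℝ) (f : ℝ → ℝ) : Prop :=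
  0 < b ∧ ContinuousOn f (Set.Ioi 0) ∧
    (∀ u : ℝ, 0 < u → u ≤ b → f u ≤ 0) ∧ (∀ u : ℝ, b < u → 0 < f u)

/-- `u` (with derivative `u'`) is a radial solution on `[0, R)` of
`(r^{N-1} |u'|^{m-2} u')' = - r^{N-1} f(u)`, positive, `C¹` up to the origin,
with `u'(0) = 0` and `u, u' → 0` as `r → R`. -/
def IsRadialSolution (N : ℕ) (m : ℝ) (f : ℝ → ℝ) (R : EReal) (u u' : ℝ → ℝ) : Prop :=
  0 < R ∧
  (∀ r ∈ domR R, HasDerivWithinAt u (u' r) (domR R) r) ∧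
  ContinuousOn u' (domR R) ∧
  (∀ r ∈ domR R, 0 < u r) ∧
  u' 0 = 0 ∧
  (∀ r : ℝ, 0 < r → (r : EReal) < R →
    HasDerivAt (fun s : ℝ => s ^ (N - 1) * |u' s| ^ (m - 2) * u' s)
      (-(r ^ (N - 1) * f (u r))) r) ∧
  Filter.Tendsto u (limR R) (nhds 0) ∧
  Filter.Tendsto u' (limR R) (nhds 0)

/-- `rr` is the (strictly decreasing) inverse on `(0, α)` of a radial solution `u`,
with derivatives `rr'`, `rr''`, satisfying the transformed ODE
`(m-1) r'' = (N-1) r'²/r + f(u) |r'|^m r'`. -/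
def IsInvSol (N : ℕ) (m α : ℝ) (f : ℝ → ℝ) (R : EReal) (u rr rr' rr'' : ℝ → ℝ) : Prop :=
  (∀ v ∈ Set.Ioo 0 α,
    0 < rr v ∧ (rr v : EReal) < R ∧ u (rr v) = v ∧
    HasDerivAt rr (rr' v) v ∧ rr' v < 0 ∧ HasDerivAt rr' (rr'' v) v ∧
    (m - 1) * rr'' v = ((N : ℝ) - 1) * (rr' v) ^ 2 / rr v + f v * |rr' v| ^ m * rr' v) ∧
  (∀ x : ℝ, 0 < x → (x : EReal) < R → ∃ v ∈ Set.Ioo 0 α, rr v = x)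

/-- The function `ω(u) = r(u)^{N-1} / (r'(u) |r'(u)|^{m-2})`. -/
def omegaF (N : ℕ) (m : ℝ) (rr rr' : ℝ → ℝ) (v : ℝ) : ℝ :=
  rr v ^ (N - 1) / (rr' v * |rr' v| ^ (m - 2))

/-- The function `P(u) = a u ω(u) + r(u)^N ((m-1)/m · 1/|r'(u)|^m + (a/N) u f(u))`. -/
def PF (N : ℕ) (m a : ℝ) (f rr rr' : ℝ → ℝ) (v : ℝ) : ℝ :=
  a * v * omegaF N m rr rr' v +
    rr v ^ N * ((m - 1) / m * (1 / |rr' v| ^ m) + a / (N : ℝ) * v * f v)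

lemma nonneg_of_rpow_abs_mul_self_nonneg (p : ℝ) {x : ℝ} (h : 0 ≤ |x| ^ p * x) : 0 ≤ x := by
  by_contra! hx
  have : 0 < |x| ^ p := Real.rpow_pos_of_pos (abs_pos.2 hx.ne) p
  nlinarith

lemma monotoneOn_Icc_of_hasDerivAt_nonneg {f f' : ℝ → ℝ} {x y : ℝ}
    (hf : ∀ s ∈ Icc x y, HasDerivAt f (f' s) s) (hf' : ∀ s ∈ Ioo x y, 0 ≤ f' s) :
    MonotoneOn f (Icc x y) :=
  monotoneOn_of_hasDerivWithinAt_nonneg (convex_Icc x y)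
    (fun s hs => (hf s hs).continuousAt.continuousWithinAt)
    (fun s hs => by
      rw [interior_Icc] at hs ⊢
      exact (hf s (Ioo_subset_Icc_self hs)).hasDerivWithinAt)
    (fun s hs => hf' s (by rwa [interior_Icc] at hs))

section Domain

variable {R : EReal}

lemma domR_mem_nhds {r : ℝ} (hr : 0 < r) (hrR : (r : EReal) < R) : domR R ∈ nhds r := by
  have hopen : IsOpen {s : ℝ | (s : EReal) < R} :=
    isOpen_lt continuous_coe_real_ereal continuous_const
  filter_upwards [Ioi_mem_nhds hr, hopen.mem_nhds hrR] with _ hs hsR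
  exact ⟨hs.le, hsR⟩

lemma Icc_subset_domR {x y : ℝ} (hx : 0 ≤ x) (hyR : (y : EReal) < R) : Icc x y ⊆ domR R :=
  fun _ hs => ⟨hx.trans hs.1, (EReal.coe_le_coe_iff.2 hs.2).trans_lt hyR⟩

lemma Ioo_mem_limR {a : ℝ} (ha : (a : EReal) < R) :
    {r : ℝ | a < r ∧ (r : EReal) < R} ∈ limR R :=
  Filter.mem_comap.2 ⟨Ioo (a : EReal) R, Ioo_mem_nhdsLT_of_mem ⟨ha, le_rfl⟩,
    fun _ hr => ⟨EReal.coe_lt_coe_iff.1 hr.1, hr.2⟩⟩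

lemma exists_forall_of_eventually_limR (hR : 0 < R) {p : ℝ → Prop}
    (h : ∀ᶠ r in limR R, p r) :
    ∃ r₁ : ℝ, 0 ≤ r₁ ∧ (r₁ : EReal) < R ∧ ∀ r : ℝ, r₁ < r → (r : EReal) < R → p r := by
  obtain ⟨t, ht, hsub⟩ := Filter.mem_comap.1 h
  obtain ⟨a, haR, hIoo⟩ := (nhdsLT_basis_of_exists_lt ⟨0, hR⟩).mem_iff.1 ht
  obtain ⟨x, hax, hxR⟩ := EReal.exists_between_coe_real haR
  refine ⟨max x 0, le_max_right _ _, ?_, fun r hr hrR => hsub (hIoo ⟨?_, hrR⟩)⟩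
  · rcases max_choice x 0 with h | h <;> rw [h]
    exacts [hxR, hR]
  · exact hax.trans_le (EReal.coe_le_coe_iff.2 ((le_max_left x 0).trans hr.le))

lemma limR_neBot (hR : 0 < R) : (limR R).NeBot := by
  rw [limR, Filter.comap_neBot_iff]
  intro t ht
  obtain ⟨a, haR, hIoo⟩ := (nhdsLT_basis_of_exists_lt ⟨0, hR⟩).mem_iff.1 ht
  obtain ⟨x, hax, hxR⟩ := EReal.exists_between_coe_real haR
  exact ⟨x, hIoo ⟨hax, hxR⟩⟩

end Domain

namespace IsRadialSolution

variable {N : ℕ} {m : ℝ} {f : ℝ → ℝ} {R : EReal} {u u' : ℝ → ℝ}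

lemma hasDerivAt (hu : IsRadialSolution N m f R u u') {r : ℝ} (hr : 0 < r)
    (hrR : (r : EReal) < R) : HasDerivAt u (u' r) r :=
  (hu.2.1 r ⟨hr.le, hrR⟩).hasDerivAt (domR_mem_nhds hr hrR)

lemma monotoneOn_of_deriv_eq_zero (hu : IsRadialSolution N m f R u u') {r₀ r : ℝ}
    (hr₀ : 0 < r₀) (hrR : (r : EReal) < R) (hf : ∀ s ∈ Ioo r₀ r, f (u s) ≤ 0)
    (hcrit : u' r₀ = 0) : MonotoneOn u (Icc r₀ r) := by
  have hdom : ∀ s ∈ Icc r₀ r, 0 < s ∧ (s : EReal) < R := fun s hs =>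
    ⟨hr₀.trans_le hs.1, (EReal.coe_le_coe_iff.2 hs.2).trans_lt hrR⟩
  have hflux : MonotoneOn (fun s : ℝ => s ^ (N - 1) * |u' s| ^ (m - 2) * u' s) (Icc r₀ r) :=
    monotoneOn_Icc_of_hasDerivAt_nonneg
      (fun s hs => hu.2.2.2.2.2.1 s (hdom s hs).1 (hdom s hs).2) fun s hs => by
        have hfs := hf s hs
        have hpow : 0 < s ^ (N - 1) := pow_pos (hr₀.trans hs.1) _
        nlinarith
  refine monotoneOn_Icc_of_hasDerivAt_nonneg
    (fun s hs => hu.hasDerivAt (hdom s hs).1 (hdom s hs).2) fun s hs => ?_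
  have hs : s ∈ Icc r₀ r := Ioo_subset_Icc_self hs
  have hflux_nonneg := hflux ⟨le_rfl, hs.1.trans hs.2⟩ hs hs.1
  simp only [hcrit, mul_zero, mul_assoc] at hflux_nonneg
  exact nonneg_of_rpow_abs_mul_self_nonneg (m - 2)
    (nonneg_of_mul_nonneg_right hflux_nonneg (pow_pos (hdom s hs).1 _))

lemma exists_forall_deriv_ne_zero (hu : IsRadialSolution N m f R u u')
    (hf : ∀ᶠ r in limR R, f (u r) ≤ 0) :
    ∃ r₁ : ℝ, 0 ≤ r₁ ∧ (r₁ : EReal) < R ∧ ∀ r : ℝ, r₁ < r → (r : EReal) < R → u' r ≠ 0 := by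
  have hR : 0 < R := hu.1
  have hlim : Tendsto u (limR R) (nhds 0) := hu.2.2.2.2.2.2.1
  obtain ⟨r₁, hr₁, hr₁R, hfr⟩ := exists_forall_of_eventually_limR hR hf
  refine ⟨r₁, hr₁, hr₁R, fun r₀ hr₀ hr₀R hcrit => ?_⟩
  have hr₀pos : 0 < r₀ := hr₁.trans_lt hr₀
  have := limR_neBot hR
  have hsmall : ∀ᶠ r in limR R, u r < u r₀ :=
    hlim (Iio_mem_nhds (hu.2.2.2.1 r₀ ⟨hr₀pos.le, hr₀R⟩))
  obtain ⟨r, hur, hr, hrR⟩ := (hsmall.and (Ioo_mem_limR hr₀R)).exists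
  have hmono := hu.monotoneOn_of_deriv_eq_zero hr₀pos hrR
    (fun s hs => hfr s (hr₀.trans hs.1) ((EReal.coe_le_coe_iff.2 hs.2.le).trans_lt hrR)) hcrit
  exact (hmono ⟨le_rfl, hr.le⟩ ⟨hr.le, le_rfl⟩ hr.le).not_gt hur

lemma exists_isGreatest_deriv_eq_zero (hu : IsRadialSolution N m f R u u')
    (hf : ∀ᶠ r in limR R, f (u r) ≤ 0) :
    ∃ rs : ℝ, 0 ≤ rs ∧ (rs : EReal) < R ∧ u' rs = 0 ∧
      ∀ r : ℝ, rs < r → (r : EReal) < R → u' r ≠ 0 := by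
  obtain ⟨r₁, hr₁, hr₁R, hne⟩ := hu.exists_forall_deriv_ne_zero hf
  obtain ⟨-, -, hcont, -, hcrit₀, -, -, -⟩ := hu
  have hcompact : IsCompact (Icc 0 r₁ ∩ u' ⁻¹' {0}) :=
    isCompact_Icc.of_isClosed_subset
      ((hcont.mono (Icc_subset_domR le_rfl hr₁R)).preimage_isClosed_of_isClosed
        isClosed_Icc isClosed_singleton)
      inter_subset_left
  obtain ⟨rs, ⟨⟨hrs, hrsr₁⟩, hcrit⟩, hgreatest⟩ :=
    hcompact.exists_isGreatest ⟨0, ⟨le_rfl, hr₁⟩, hcrit₀⟩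
  refine ⟨rs, hrs, (EReal.coe_le_coe_iff.2 hrsr₁).trans_lt hr₁R, hcrit,
    fun r hr hrR hcrit_r => ?_⟩
  rcases le_or_gt r r₁ with hrr₁ | hr₁r
  · exact (hgreatest ⟨⟨hrs.trans hr.le, hrr₁⟩, hcrit_r⟩).not_gt hr
  · exact hne r hr₁r hrR hcrit_r

end IsRadialSolution

theorem stmt8_general (m b : ℝ) (f : ℝ → ℝ) (hf : H1cond b f)
    (R : EReal) (u u' : ℝ → ℝ) (hu : IsRadialSolution 1 m f R u u') :
    ∃ rs : ℝ, 0 ≤ rs ∧ (rs : EReal) < R ∧ u' rs = 0 ∧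
      ∀ r : ℝ, rs < r → (r : EReal) < R → u' r ≠ 0 := by
  obtain ⟨hb, -, hf_nonpos, -⟩ := hf
  refine hu.exists_isGreatest_deriv_eq_zero ?_
  obtain ⟨hR, -, -, hpos, -, -, hlim, -⟩ := hu
  filter_upwards [hlim (Iio_mem_nhds hb), Ioo_mem_limR hR] with r hub hr
  exact hf_nonpos _ (hpos r ⟨hr.1.le, hr.2⟩) hub.le

/-- for `N = 1`, `m > 1`, under (H1), the set of critical points of a radial
solution in `[0, R)` has a greatest element `r*`. -/
theorem stmt8 (m b : ℝ) (f : ℝ → ℝ) (hm : 1 < m) (hf : H1cond b f)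
    (R : EReal) (u u' : ℝ → ℝ) (hu : IsRadialSolution 1 m f R u u') :
    ∃ rs : ℝ, 0 ≤ rs ∧ (rs : EReal) < R ∧ u' rs = 0 ∧
      ∀ r : ℝ, rs < r → (r : EReal) < R → u' r ≠ 0 :=
  stmt8_general m b f hf R u u' hu

end
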